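/- arXiv:0804.1649 — 6 statements merged into one kernel-verified Lean document; each statement's English description precedes it below -/
import Mathlib

section
/- For non-constant rational functions g, h over a field K, the degree of the composition g∘h equals (deg g)·(deg h), where the degree of a rational function f = f_N/f_D in lowest terms is max(deg f_N, deg f_D). -/
open Polynomial

/-- Composition of rational functions: `ratComp g h = g ∘ h = g(h)`. -/
noncomputable def ratComp {K : Type*} [Field K] (g h : RatFunc K) : RatFunc K :=
  RatFunc.eval (algebraMap K (RatFunc K)) h g

/-- Degree of a rational function `f = f_N / f_D` in lowest terms:
`max (deg f_N) (deg f_D)`. -/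
noncomputable def ratDeg {K : Type*} [Field K] (f : RatFunc K) : ℕ :=
  max f.num.natDegree f.denom.natDegree

/-- The fixing group of `f`: Möbius transformations (degree-1 rational
functions) `u` with `f ∘ u = f`. -/
noncomputable def fixGroup {K : Type*} [Field K] (f : RatFunc K) : Set (RatFunc K) :=
  {u | ratDeg u = 1 ∧ ratComp f u = f}

/-!
The degree of a rational function `f` is the field degree `[K(x) : K(f)]` (Mathlib's
`RatFunc.finrank_eq_max_natDegree`). For `h` non-constant, hence transcendental, the
substitution `x ↦ h` is an isomorphism `K(x) ≃ K(h)` carrying `K(g)` onto `K(g ∘ h)`, so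
`[K(h) : K(g ∘ h)] = deg g`, and the tower `K(g ∘ h) ≤ K(h) ≤ K(x)` multiplies the degrees.
-/

open IntermediateField

theorem IntermediateField.map_top_val_comp_algEquiv {K L M : Type*} [Field K] [Field L]
    [Field M] [Algebra K L] [Algebra K M] (S : IntermediateField K M) (e : L ≃ₐ[K] S) :
    (⊤ : IntermediateField K L).map (S.val.comp e.toAlgHom) = S := by
  rw [← AlgHom.fieldRange_eq_map]
  ext x
  simp only [AlgHom.mem_fieldRange, AlgHom.comp_apply, coe_val]
  exact ⟨fun ⟨y, hy⟩ => hy ▸ (e y).2, fun hx => ⟨e.symm ⟨x, hx⟩, by simp⟩⟩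

namespace RatFunc

variable {K : Type*} [Field K]

theorem ratDeg_eq_finrank (f : RatFunc K) : ratDeg f = Module.finrank K⟮f⟯ (RatFunc K) :=
  (finrank_eq_max_natDegree f).symm

theorem transcendental_of_ratDeg_pos {f : RatFunc K} (hf : 0 < ratDeg f) :
    Transcendental K f :=
  transcendental_of_ne_C f fun hc => by
    rw [eq_C_iff] at hc
    simp [ratDeg, hc] at hf

theorem ratComp_eq_algEquivOfTranscendental (g : RatFunc K) {h : RatFunc K}
    (ht : Transcendental K h) : ratComp g h = algEquivOfTranscendental h ht g := by
  rw [algEquivOfTranscendental_apply, ratComp, RatFunc.eval, aeval_def, aeval_def]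

theorem adjoin_ratComp_le (g : RatFunc K) {h : RatFunc K} (ht : Transcendental K h) :
    K⟮ratComp g h⟯ ≤ K⟮h⟯ := by
  rw [adjoin_simple_le_iff, ratComp_eq_algEquivOfTranscendental g ht]
  exact SetLike.coe_mem _

theorem relfinrank_adjoin_ratComp (g : RatFunc K) {h : RatFunc K} (ht : Transcendental K h) :
    relfinrank K⟮ratComp g h⟯ K⟮h⟯ = Module.finrank K⟮g⟯ (RatFunc K) := by
  set σ := K⟮h⟯.val.comp (algEquivOfTranscendental h ht).toAlgHom
  have hg : K⟮g⟯.map σ = K⟮ratComp g h⟯ := by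
    rw [adjoin_map, Set.image_singleton, ratComp_eq_algEquivOfTranscendental g ht]
    rfl
  rw [← hg, ← map_top_val_comp_algEquiv K⟮h⟯ (algEquivOfTranscendental h ht),
    relfinrank_map_map, relfinrank_top_right]

end RatFunc

open RatFunc in
theorem ratDeg_comp_general {K : Type*} [Field K] (g h : RatFunc K)
    (hh : 0 < ratDeg h) :
    ratDeg (ratComp g h) = ratDeg g * ratDeg h := by
  have ht := transcendental_of_ratDeg_pos hh
  calc ratDeg (ratComp g h) = relfinrank K⟮ratComp g h⟯ ⊤ := by
        rw [ratDeg_eq_finrank, relfinrank_top_right]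
    _ = relfinrank K⟮ratComp g h⟯ K⟮h⟯ * relfinrank K⟮h⟯ ⊤ :=
        (relfinrank_mul_relfinrank (adjoin_ratComp_le g ht) le_top).symm
    _ = ratDeg g * ratDeg h := by
        rw [relfinrank_adjoin_ratComp g ht, relfinrank_top_right, ratDeg_eq_finrank,
          ratDeg_eq_finrank]

/-- The degree of a composition of non-constant rational functions is the
product of the degrees. -/
theorem ratDeg_comp {K : Type*} [Field K] (g h : RatFunc K)
    (hg : 0 < ratDeg g) (hh : 0 < ratDeg h) :
    ratDeg (ratComp g h) = ratDeg g * ratDeg h :=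
  ratDeg_comp_general g h hh
end

section
/- If f ∈ K[x] is a non-constant polynomial and f = g∘h for rational functions g, h ∈ K(x)\K, then there exists a Möbius unit u ∈ K(x) of degree 1 such that g∘u and u⁻¹∘h are both polynomials. -/
open Polynomial

/-!
Write `g = P / Q` and `h = N / D` in lowest terms and let `n = deg g`. Homogenizing,
`f = P(N, D) / Q(N, D)` with `P(N, D) = D ^ n P(N / D)` and `Q(N, D) = D ^ n Q(N / D)` coprime
polynomials, so `Q(N, D)`, which divides `P(N, D)`, is a nonzero constant. If `D = 1`, then
`Q(N) = Q(N, 1)` is constant, so `Q = 1` and `u = X` works. Otherwise pick `w` such that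
`φ = N - w D` has degree `≠ deg D`; then `Q(N, D) = G(φ, D)` for `G = Q(X + w)`, and since the
monomials `φ ^ k D ^ l` have pairwise distinct degrees, `G(φ, D)` can only be constant if `G` is
a multiple of `X ^ n` and `φ` is constant. So `Q = k (X - w) ^ n` and `h - w = c / D`, and
`u = w + 1 / X`, `v = 1 / (X - w)` work. That `u` has degree one follows from `X ∈ K(u)`, as the
degree of `u` is `[K(X) : K(u)]`.
-/
namespace Polynomial

open Finset

theorem aeval_homogenize {R A : Type*} [CommSemiring R] [CommSemiring A] [Algebra R A]
    (p : R[X]) (n : ℕ) (x : Fin 2 → A) :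
    MvPolynomial.aeval x (p.homogenize n) =
      ∑ kl ∈ antidiagonal n, algebraMap R A (p.coeff kl.1) * x 0 ^ kl.1 * x 1 ^ kl.2 := by
  simp [homogenize, MvPolynomial.aeval_monomial, Finsupp.prod_fintype, mul_assoc]

theorem aeval_homogenize_eq_pow_mul_aeval_div {R L : Type*} [CommSemiring R] [Field L]
    [Algebra R L] {p : R[X]} {n : ℕ} (hp : p.natDegree ≤ n) (x : L) {y : L} (hy : y ≠ 0) :
    MvPolynomial.aeval ![x, y] (p.homogenize n) = y ^ n * aeval (x / y) p := by
  rw [aeval_homogenize, Nat.sum_antidiagonal_eq_sum_range_succ_mk,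
    aeval_eq_sum_range' (Nat.lt_succ_of_le hp), mul_sum]
  refine sum_congr rfl fun k hk => ?_
  have hkn : k ≤ n := Nat.lt_succ_iff.mp (mem_range.mp hk)
  simp only [Matrix.cons_val_zero, Matrix.cons_val_one, Algebra.smul_def,
    div_pow, pow_sub₀ y hy hkn]
  field_simp

section Coprime

variable {K A : Type*} [Field K] [CommRing A] [Algebra K A]

theorem isCoprime_aeval_homogenize_right {p : K[X]} {n : ℕ} (hp : p.coeff n ≠ 0) {a b : A}
    (hab : IsCoprime a b) : IsCoprime (MvPolynomial.aeval ![a, b] (p.homogenize n)) b := by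
  have hmem : (n, 0) ∈ antidiagonal n := by simp
  obtain ⟨z, hz⟩ : b ∣ MvPolynomial.aeval ![a, b] (p.homogenize n) -
      algebraMap K A (p.coeff n) * a ^ n := by
    rw [aeval_homogenize, ← add_sum_erase _ _ hmem]
    simp only [Matrix.cons_val_zero, Matrix.cons_val_one, pow_zero, mul_one, add_sub_cancel_left]
    refine dvd_sum fun kl hkl => Dvd.dvd.mul_left (dvd_pow_self b fun h0 => ?_) _
    obtain ⟨hne, hkl⟩ := mem_erase.mp hkl
    exact hne (Prod.ext (by simpa [h0] using mem_antidiagonal.mp hkl) h0)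
  rw [sub_eq_iff_eq_add'] at hz
  rw [hz]
  exact ((isCoprime_mul_unit_left_left ((isUnit_iff_ne_zero.mpr hp).map (algebraMap K A)) _ _).mpr
    hab.pow_left).add_mul_left_left z

theorem isCoprime_aeval_homogenize {p q : K[X]} {n : ℕ} (hpq : IsCoprime p q)
    (hp : p.natDegree ≤ n) (hq : q.natDegree ≤ n) (hn : p.coeff n ≠ 0 ∨ q.coeff n ≠ 0)
    {a b : A} (hab : IsCoprime a b) :
    IsCoprime (MvPolynomial.aeval ![a, b] (p.homogenize n))
      (MvPolynomial.aeval ![a, b] (q.homogenize n)) := by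
  obtain ⟨r, s, hrs⟩ := hpq
  obtain ⟨m, hr, hs⟩ : ∃ m, r.natDegree ≤ m ∧ s.natDegree ≤ m :=
    ⟨_, le_max_left _ _, le_max_right _ _⟩
  have bezout : MvPolynomial.aeval ![a, b] (r.homogenize m) *
        MvPolynomial.aeval ![a, b] (p.homogenize n) +
      MvPolynomial.aeval ![a, b] (s.homogenize m) *
        MvPolynomial.aeval ![a, b] (q.homogenize n) = b ^ (m + n) := by
    have := congrArg (fun F => MvPolynomial.aeval ![a, b] (F.homogenize (m + n))) hrs
    simpa [homogenize_mul r p hr hp, homogenize_mul s q hs hq] using this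
  have of_bezout : ∀ {x y r' s' : A}, r' * x + s' * y = b ^ (m + n) → IsCoprime x b →
      IsCoprime x y := by
    intro x y r' s' h hx
    have := hx.pow_right (n := m + n)
    rw [← h, add_comm, mul_comm _ x] at this
    exact this.of_add_mul_left_right.of_mul_right_right
  rcases hn with hn | hn
  · exact of_bezout bezout (isCoprime_aeval_homogenize_right hn hab)
  · exact (of_bezout ((add_comm _ _).trans bezout) (isCoprime_aeval_homogenize_right hn hab)).symm

end Coprime

section Field

variable {K : Type*} [Field K]

theorem le_natDegree_aeval_homogenize {a b : K[X]} (ha : a ≠ 0) (hb : b ≠ 0)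
    (hab : a.natDegree ≠ b.natDegree) {p : K[X]} {n k l : ℕ} (hkl : (k, l) ∈ antidiagonal n)
    (hk : p.coeff k ≠ 0) :
    k * a.natDegree + l * b.natDegree ≤
      (MvPolynomial.aeval ![a, b] (p.homogenize n)).natDegree := by
  set term : ℕ × ℕ → K[X] := fun kl => algebraMap K K[X] (p.coeff kl.1) * a ^ kl.1 * b ^ kl.2
  have natDegree_term : ∀ kl : ℕ × ℕ, term kl ≠ 0 →
      (term kl).natDegree = kl.1 * a.natDegree + kl.2 * b.natDegree := by
    intro kl hkl
    have hc : p.coeff kl.1 ≠ 0 := fun h0 => hkl (by simp [term, h0])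
    simp [term, natDegree_mul, natDegree_C_mul hc, ha, hb, hc, natDegree_pow]
  have hterm : term (k, l) ≠ 0 := by simp [term, hk, ha, hb]
  rw [aeval_homogenize]
  simp only [Matrix.cons_val_zero, Matrix.cons_val_one]
  rw [natDegree_sum_eq_of_disjoint]
  · exact (natDegree_term _ hterm).symm.le.trans (le_sup (f := fun kl => (term kl).natDegree) hkl)
  · rintro ⟨k₁, l₁⟩ ⟨hmem₁, hne₁⟩ ⟨k₂, l₂⟩ ⟨hmem₂, hne₂⟩ hne heq
    simp only [Function.comp_apply] at heq
    rw [natDegree_term _ hne₁, natDegree_term _ hne₂] at heq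
    have h₁ := mem_antidiagonal.mp hmem₁
    have h₂ := mem_antidiagonal.mp hmem₂
    have : ((k₁ : ℤ) - k₂) * ((a.natDegree : ℤ) - b.natDegree) = 0 := by
      zify at heq h₁ h₂
      linear_combination heq - (b.natDegree : ℤ) * (h₁ - h₂)
    rcases mul_eq_zero.mp this with h | h
    · exact hne (Prod.ext (by omega) (by omega))
    · exact hab (by omega)

theorem natDegree_eq_zero_and_eq_C_mul_X_pow_of_aeval_homogenize {a b p : K[X]} {n : ℕ}
    (ha : a ≠ 0) (hb : b ≠ 0) (hab : a.natDegree ≠ b.natDegree) (hb₀ : 0 < b.natDegree)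
    (hn : 0 < n) (hp : p ≠ 0) (hpn : p.natDegree ≤ n)
    (h₀ : (MvPolynomial.aeval ![a, b] (p.homogenize n)).natDegree = 0) :
    a.natDegree = 0 ∧ p = C (p.coeff n) * X ^ n := by
  have support : ∀ k ∈ p.support, k = n ∧ k * a.natDegree = 0 := by
    intro k hk
    have hkn : k ≤ n := (le_natDegree_of_mem_supp k hk).trans hpn
    have := le_natDegree_aeval_homogenize ha hb hab
      (mem_antidiagonal.mpr (Nat.add_sub_cancel' hkn)) (mem_support_iff.mp hk)
    rw [h₀, Nat.le_zero, Nat.add_eq_zero_iff] at this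
    obtain ⟨hka, hkb⟩ := this
    refine ⟨?_, hka⟩
    rcases Nat.mul_eq_zero.mp hkb with h | h <;> omega
  obtain ⟨k, hk⟩ := nonempty_support_iff.mpr hp
  refine ⟨?_, ?_⟩
  · obtain ⟨rfl, hk⟩ := support k hk
    exact (Nat.mul_eq_zero.mp hk).resolve_left hn.ne'
  · ext i
    rw [coeff_C_mul_X_pow]
    split_ifs with hi
    · rw [hi]
    · exact notMem_support_iff.mp fun h => hi (support i h).1

theorem algebraMap_aeval_homogenize {p : K[X]} {n : ℕ} (hp : p.natDegree ≤ n) (a : K[X])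
    {b : K[X]} (hb : b ≠ 0) :
    algebraMap K[X] (RatFunc K) (MvPolynomial.aeval ![a, b] (p.homogenize n)) =
      algebraMap K[X] (RatFunc K) b ^ n *
        aeval (algebraMap K[X] (RatFunc K) a / algebraMap K[X] (RatFunc K) b) p := by
  rw [← aeval_homogenize_eq_pow_mul_aeval_div hp _ (RatFunc.algebraMap_ne_zero hb),
    ← IsScalarTower.coe_toAlgHom' K K[X] (RatFunc K), MvPolynomial.comp_aeval_apply]
  refine congrArg (MvPolynomial.aeval · _) (_root_.funext fun i => ?_)
  fin_cases i <;> rfl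

theorem aeval_homogenize_comp_X_add_C {p : K[X]} {n : ℕ} (hp : p.natDegree ≤ n) (w : K)
    (a : K[X]) {b : K[X]} (hb : b ≠ 0) :
    MvPolynomial.aeval ![a - C w * b, b] ((p.comp (X + C w)).homogenize n) =
      MvPolynomial.aeval ![a, b] (p.homogenize n) := by
  have hpw : (p.comp (X + C w)).natDegree ≤ n := by
    rwa [natDegree_comp, natDegree_X_add_C, mul_one]
  apply RatFunc.algebraMap_injective K
  rw [algebraMap_aeval_homogenize hpw _ hb, algebraMap_aeval_homogenize hp _ hb, aeval_comp]
  congr 2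
  rw [map_add, aeval_X, aeval_C, map_sub, map_mul, sub_div,
    mul_div_cancel_right₀ _ (RatFunc.algebraMap_ne_zero hb), RatFunc.algebraMap_C,
    RatFunc.algebraMap_eq_C, sub_add_cancel]

theorem exists_sub_C_mul_eq_C_and_comp_eq_C_mul_X_pow {N D q : K[X]} {n : ℕ}
    (hND : IsCoprime N D) (hD : D.Monic) (hD₀ : 0 < D.natDegree) (hn : 0 < n) (hq : q ≠ 0)
    (hqn : q.natDegree ≤ n) (h₀ : (MvPolynomial.aeval ![N, D] (q.homogenize n)).natDegree = 0) :
    ∃ w c k : K, N - C w * D = C c ∧ q.comp (X + C w) = C k * X ^ n := by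
  set w := N.coeff D.natDegree
  set φ := N - C w * D
  have hφ : φ ≠ 0 := fun h0 =>
    hD₀.ne' <| natDegree_eq_zero_of_isUnit <|
      hND.isUnit_of_dvd' ⟨C w, by rw [sub_eq_zero.mp h0, mul_comm]⟩ dvd_rfl
  have hφD : φ.natDegree ≠ D.natDegree := fun h => hφ <| by
    rw [← leadingCoeff_eq_zero, leadingCoeff, h, coeff_sub, coeff_C_mul, hD.coeff_natDegree,
      mul_one, sub_self]
  have hqw : (q.comp (X + C w)).natDegree ≤ n := by
    rwa [natDegree_comp, natDegree_X_add_C, mul_one]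
  have hqw₀ : q.comp (X + C w) ≠ 0 := by simp [comp_eq_zero_iff, hq]
  obtain ⟨hφ₀, hq'⟩ := natDegree_eq_zero_and_eq_C_mul_X_pow_of_aeval_homogenize hφ
    hD.ne_zero hφD hD₀ hn hqw₀ hqw (by rwa [aeval_homogenize_comp_X_add_C hqn w N hD.ne_zero])
  exact ⟨w, φ.coeff 0, _, eq_C_of_natDegree_eq_zero hφ₀, hq'⟩

end Field

end Polynomial

section RatFunc

variable {K : Type*} [Field K]

open IntermediateField

theorem ratComp_eq_aeval_div (g h : RatFunc K) :
    ratComp g h = aeval h g.num / aeval h g.denom := by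
  simp [ratComp, RatFunc.eval, aeval_def]

theorem natDegree_num_le_ratDeg (g : RatFunc K) : g.num.natDegree ≤ ratDeg g :=
  le_max_left _ _

theorem natDegree_denom_le_ratDeg (g : RatFunc K) : g.denom.natDegree ≤ ratDeg g :=
  le_max_right _ _

theorem ratComp_div_eq (g : RatFunc K) (a : K[X]) {b : K[X]} (hb : b ≠ 0) :
    ratComp g (algebraMap K[X] (RatFunc K) a / algebraMap K[X] (RatFunc K) b) =
      algebraMap K[X] (RatFunc K) (MvPolynomial.aeval ![a, b] (g.num.homogenize (ratDeg g))) /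
        algebraMap K[X] (RatFunc K)
          (MvPolynomial.aeval ![a, b] (g.denom.homogenize (ratDeg g))) := by
  rw [ratComp_eq_aeval_div, algebraMap_aeval_homogenize (natDegree_num_le_ratDeg g) _ hb,
    algebraMap_aeval_homogenize (natDegree_denom_le_ratDeg g) _ hb,
    mul_div_mul_left _ _ (pow_ne_zero _ (RatFunc.algebraMap_ne_zero hb))]

theorem coeff_ratDeg_ne_zero (g : RatFunc K) :
    g.num.coeff (ratDeg g) ≠ 0 ∨ g.denom.coeff (ratDeg g) ≠ 0 := by
  rcases le_or_gt g.num.natDegree g.denom.natDegree with h | h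
  · right
    rw [ratDeg, max_eq_right h, g.monic_denom.coeff_natDegree]
    exact one_ne_zero
  · left
    rw [ratDeg, max_eq_left h.le, coeff_natDegree, leadingCoeff_ne_zero]
    rintro h0
    simp [h0] at h

theorem isUnit_aeval_homogenize_denom {f : K[X]} (hf : f ≠ 0) {g h : RatFunc K}
    (e : algebraMap K[X] (RatFunc K) f = ratComp g h) :
    IsUnit (MvPolynomial.aeval ![h.num, h.denom] (g.denom.homogenize (ratDeg g))) := by
  have hcop := isCoprime_aeval_homogenize g.isCoprime_num_denom
    (natDegree_num_le_ratDeg g) (natDegree_denom_le_ratDeg g) (coeff_ratDeg_ne_zero g)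
    h.isCoprime_num_denom
  rw [← RatFunc.num_div_denom h, ratComp_div_eq g _ h.denom_ne_zero] at e
  set Q := MvPolynomial.aeval ![h.num, h.denom] (g.denom.homogenize (ratDeg g))
  have hQ : Q ≠ 0 := by
    rintro hQ
    rw [hQ, map_zero, div_zero] at e
    exact hf (RatFunc.algebraMap_injective K (e.trans (map_zero _).symm))
  refine hcop.isUnit_of_dvd' ⟨f, RatFunc.algebraMap_injective K ?_⟩ dvd_rfl
  rw [map_mul, e, mul_div_cancel₀ _ (RatFunc.algebraMap_ne_zero hQ)]

theorem denom_eq_one_of_isUnit_aeval_denom {g : RatFunc K} {N : K[X]} (hN : 0 < N.natDegree)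
    (hu : IsUnit (aeval N g.denom)) : g.denom = 1 := by
  have := natDegree_eq_zero_of_isUnit hu
  rw [← comp_eq_aeval, natDegree_comp, Nat.mul_eq_zero] at this
  exact g.monic_denom.natDegree_eq_zero.mp (this.resolve_right hN.ne')

theorem ratDeg_eq_finrank (f : RatFunc K) : ratDeg f = Module.finrank K⟮f⟯ (RatFunc K) :=
  (RatFunc.finrank_eq_max_natDegree f).symm

theorem ratDeg_eq_one_of_X_mem_adjoin {u : RatFunc K} (hX : RatFunc.X ∈ K⟮u⟯) :
    ratDeg u = 1 := by
  rw [ratDeg_eq_finrank, finrank_eq_one_iff_eq_top, eq_top_iff, ← RatFunc.adjoin_X,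
    adjoin_simple_le_iff]
  exact hX

theorem transcendental_of_ratDeg_pos {f : RatFunc K} (hf : 0 < ratDeg f) : Transcendental K f :=
  f.transcendental_of_ne_C fun ⟨c, hc⟩ => by
    simp [ratDeg, hc, RatFunc.num_C, RatFunc.denom_C] at hf

noncomputable def ratCompHom (h : RatFunc K) (hh : Transcendental K h) :
    RatFunc K →ₐ[K] RatFunc K :=
  RatFunc.liftAlgHom (aeval h)
    (nonZeroDivisors_le_comap_nonZeroDivisors_of_injective _ (transcendental_iff_injective.mp hh))

theorem ratCompHom_apply {h : RatFunc K} (hh : Transcendental K h) (g : RatFunc K) :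
    ratCompHom h hh g = ratComp g h := by
  rw [ratCompHom, RatFunc.liftAlgHom_apply, ratComp_eq_aeval_div]

theorem ratCompHom_X {h : RatFunc K} (hh : Transcendental K h) :
    ratCompHom h hh RatFunc.X = h := by
  simp [ratCompHom_apply, ratComp_eq_aeval_div, RatFunc.num_X, RatFunc.denom_X]

theorem ratComp_X (g : RatFunc K) : ratComp g RatFunc.X = g := by
  simp [ratComp_eq_aeval_div, RatFunc.aeval_X_left_eq_algebraMap]

theorem X_ratComp (h : RatFunc K) : ratComp RatFunc.X h = h := by
  simp [ratComp_eq_aeval_div, RatFunc.num_X, RatFunc.denom_X]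

theorem ratComp_C_add_X_inv (w : K) {h : RatFunc K} (hh : Transcendental K h) :
    ratComp (RatFunc.C w + RatFunc.X⁻¹) h = RatFunc.C w + h⁻¹ := by
  rw [← ratCompHom_apply hh, map_add, map_inv₀, ratCompHom_X, ← RatFunc.algebraMap_eq_C,
    AlgHom.commutes]

theorem ratComp_X_sub_C_inv (w : K) {h : RatFunc K} (hh : Transcendental K h) :
    ratComp (RatFunc.X - RatFunc.C w)⁻¹ h = (h - RatFunc.C w)⁻¹ := by
  rw [← ratCompHom_apply hh, map_inv₀, map_sub, ratCompHom_X, ← RatFunc.algebraMap_eq_C,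
    AlgHom.commutes]

theorem ratDeg_C_add_X_inv (w : K) : ratDeg (RatFunc.C w + RatFunc.X⁻¹) = 1 := by
  refine ratDeg_eq_one_of_X_mem_adjoin ?_
  have hX : RatFunc.X = (RatFunc.C w + RatFunc.X⁻¹ - algebraMap K (RatFunc K) w)⁻¹ := by
    simp [RatFunc.algebraMap_eq_C]
  have hmem := inv_mem (sub_mem (mem_adjoin_simple_self K (RatFunc.C w + RatFunc.X⁻¹))
    (IntermediateField.algebraMap_mem _ w))
  rwa [← hX] at hmem

theorem ratDeg_X_sub_C_inv (w : K) : ratDeg (RatFunc.X - RatFunc.C w)⁻¹ = 1 := by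
  refine ratDeg_eq_one_of_X_mem_adjoin ?_
  have hX : RatFunc.X = ((RatFunc.X - RatFunc.C w)⁻¹)⁻¹ + algebraMap K (RatFunc K) w := by
    simp [RatFunc.algebraMap_eq_C]
  have hmem := add_mem (inv_mem (mem_adjoin_simple_self K (RatFunc.X - RatFunc.C w)⁻¹))
    (IntermediateField.algebraMap_mem _ w)
  rwa [← hX] at hmem

theorem exists_ratComp_C_add_X_inv_eq_algebraMap {g : RatFunc K} {w k : K}
    (hg : g.denom.comp (X + C w) = C k * X ^ ratDeg g) :
    ∃ G : K[X], ratComp g (RatFunc.C w + RatFunc.X⁻¹) = algebraMap K[X] (RatFunc K) G := by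
  have hu : RatFunc.C w + RatFunc.X⁻¹ =
      algebraMap K[X] (RatFunc K) (C w * X + 1) / algebraMap K[X] (RatFunc K) X := by
    rw [map_add, map_mul, map_one, RatFunc.algebraMap_C, RatFunc.algebraMap_X, add_div,
      mul_div_cancel_right₀ _ RatFunc.X_ne_zero, one_div]
  have hden : MvPolynomial.aeval ![C w * X + 1, X] (g.denom.homogenize (ratDeg g)) = C k := by
    rw [← aeval_homogenize_comp_X_add_C (natDegree_denom_le_ratDeg g) w _ X_ne_zero, hg]
    simp
  refine ⟨C k⁻¹ * MvPolynomial.aeval ![C w * X + 1, X] (g.num.homogenize (ratDeg g)), ?_⟩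
  rw [hu, ratComp_div_eq g _ X_ne_zero, hden, map_mul, RatFunc.algebraMap_C,
    RatFunc.algebraMap_C, map_inv₀, div_eq_inv_mul]

theorem exists_ratComp_X_sub_C_inv_eq_algebraMap {h : RatFunc K} (hh : Transcendental K h)
    {w c : K} (hc : h.num - C w * h.denom = C c) :
    ∃ H : K[X], ratComp (RatFunc.X - RatFunc.C w)⁻¹ h = algebraMap K[X] (RatFunc K) H := by
  have hD := RatFunc.algebraMap_ne_zero h.denom_ne_zero
  have hsub : h - RatFunc.C w = RatFunc.C c / algebraMap K[X] (RatFunc K) h.denom := by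
    rw [← RatFunc.algebraMap_C c, ← hc, map_sub, map_mul, sub_div, mul_div_cancel_right₀ _ hD,
      RatFunc.num_div_denom, RatFunc.algebraMap_C]
  refine ⟨C c⁻¹ * h.denom, ?_⟩
  rw [ratComp_X_sub_C_inv w hh, hsub, inv_div, map_mul, RatFunc.algebraMap_C, map_inv₀,
    div_eq_inv_mul]

end RatFunc

/-- If a non-constant polynomial decomposes as a composition of rational
functions `g ∘ h`, then there is a Möbius unit `u` such that `g ∘ u` and
`u⁻¹ ∘ h` are polynomials. -/
theorem poly_decomposition_of_ratFunc {K : Type*} [Field K] (f : K[X]) (g h : RatFunc K)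
    (hf : 0 < f.natDegree) (hg : 0 < ratDeg g) (hh : 0 < ratDeg h)
    (e : algebraMap K[X] (RatFunc K) f = ratComp g h) :
    ∃ u v : RatFunc K, ratDeg u = 1 ∧
      ratComp u v = RatFunc.X ∧ ratComp v u = RatFunc.X ∧
      (∃ G : K[X], ratComp g u = algebraMap K[X] (RatFunc K) G) ∧
      (∃ H : K[X], ratComp v h = algebraMap K[X] (RatFunc K) H) := by
  have hunit := isUnit_aeval_homogenize_denom (ne_zero_of_natDegree_gt hf) e
  rcases (h.denom.natDegree).eq_zero_or_pos with ht | ht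
  · have hD : h.denom = 1 := h.monic_denom.natDegree_eq_zero.mp ht
    have hN : 0 < h.num.natDegree := by simpa [ratDeg, hD] using hh
    rw [hD, aeval_homogenize_of_eq_one (natDegree_denom_le_ratDeg g) _ rfl] at hunit
    have hQ := denom_eq_one_of_isUnit_aeval_denom hN hunit
    refine ⟨RatFunc.X, RatFunc.X, ratDeg_eq_one_of_X_mem_adjoin
      (IntermediateField.mem_adjoin_simple_self K _), X_ratComp _, X_ratComp _,
      ⟨g.num, ?_⟩, ⟨h.num, ?_⟩⟩
    · simpa [ratComp_X, hQ] using g.num_div_denom.symm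
    · simpa [X_ratComp, hD] using h.num_div_denom.symm
  · obtain ⟨w, c, k, hc, hk⟩ := exists_sub_C_mul_eq_C_and_comp_eq_C_mul_X_pow
      h.isCoprime_num_denom h.monic_denom ht hg g.denom_ne_zero (natDegree_denom_le_ratDeg g)
      (natDegree_eq_zero_of_isUnit hunit)
    have hu := ratDeg_C_add_X_inv w
    have hv := ratDeg_X_sub_C_inv w
    refine ⟨_, _, hu, ?_, ?_, exists_ratComp_C_add_X_inv_eq_algebraMap hk,
      exists_ratComp_X_sub_C_inv_eq_algebraMap (transcendental_of_ratDeg_pos hh) hc⟩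
    · rw [ratComp_C_add_X_inv w (transcendental_of_ratDeg_pos (hv ▸ one_pos)), inv_inv,
        add_sub_cancel]
    · rw [ratComp_X_sub_C_inv w (transcendental_of_ratDeg_pos (hu ▸ one_pos)),
        add_sub_cancel_left, inv_inv]
end

section
/- If f ∈ K(x)\K satisfies |Γ_K(f)| = deg f, then the field extension K(f) ⊆ K(x) is normal. -/
open Polynomial

/-!
`X` is a root of `f.num(T) - f * f.denom(T)` over `K⟮f⟯`, so `[K⟮X⟯ : K⟮f⟯] = deg f`. Each
`u ∈ Γ(f)` gives the `K⟮f⟯`-endomorphism `g ↦ g ∘ u` of `K⟮X⟯`, and distinct `u` give distinct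
endomorphisms (look at the image of `X`). Hence the extension has at least as many endomorphisms
as its degree, which forces it to be Galois.
-/

open Module IntermediateField

theorem IsGalois.of_finrank_le_card_algHom {F E : Type*} [Field F] [Field E] [Algebra F E]
    [FiniteDimensional F E] (h : finrank F E ≤ Nat.card (E →ₐ[F] E)) : IsGalois F E := by
  refine IsGalois.of_card_aut_eq_finrank F E (le_antisymm ?_ ?_)
  · rw [Nat.card_eq_fintype_card]; exact AlgEquiv.card_le
  · rwa [Nat.card_congr (algEquivEquivAlgHom F E).toEquiv]

theorem AlgHom.apply_eq_self_of_mem_adjoin_simple {F E : Type*} [Field F] [Field E] [Algebra F E]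
    {φ : E →ₐ[F] E} {a x : E} (ha : φ a = a) (hx : x ∈ F⟮a⟯) : φ x = x := by
  obtain ⟨r, s, rfl⟩ := (mem_adjoin_simple_iff F x).mp hx
  rw [map_div₀, ← aeval_algHom_apply, ← aeval_algHom_apply, ha]

def AlgHom.adjoinSimpleOfFix {F E : Type*} [Field F] [Field E] [Algebra F E]
    (φ : E →ₐ[F] E) {a : E} (ha : φ a = a) : E →ₐ[F⟮a⟯] E where
  __ := φ.toRingHom
  commutes' x := φ.apply_eq_self_of_mem_adjoin_simple ha x.2

namespace RatFunc

variable {K : Type*} [Field K]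

theorem transcendental_of_ratDeg_pos_s9 {u : K⟮X⟯} (hu : 0 < ratDeg u) : Transcendental K u :=
  transcendental_of_ne_C u <| by
    rintro ⟨c, rfl⟩
    simp [ratDeg] at hu

noncomputable def compAlgHom (u : K⟮X⟯) (hu : Transcendental K u) : K⟮X⟯ →ₐ[K] K⟮X⟯ :=
  liftAlgHom (aeval u) <| nonZeroDivisors_le_comap_nonZeroDivisors_of_injective _ <|
    transcendental_iff_injective.mp hu

theorem compAlgHom_apply {u : K⟮X⟯} (hu : Transcendental K u) (g : K⟮X⟯) :
    compAlgHom u hu g = ratComp g u := by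
  rw [compAlgHom, liftAlgHom_apply, aeval_def, aeval_def]
  rfl

theorem compAlgHom_X {u : K⟮X⟯} (hu : Transcendental K u) : compAlgHom u hu X = u := by
  rw [compAlgHom_apply, ratComp, eval_X]

theorem transcendental_of_mem_fixGroup {f u : K⟮X⟯} (hu : u ∈ fixGroup f) :
    Transcendental K u :=
  transcendental_of_ratDeg_pos_s9 (hu.1 ▸ Nat.one_pos)

noncomputable def fixGroupToAlgHom (f : K⟮X⟯) (u : fixGroup f) : K⟮X⟯ →ₐ[K⟮f⟯] K⟮X⟯ :=
  (compAlgHom u.1 (transcendental_of_mem_fixGroup u.2)).adjoinSimpleOfFix <|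
    (compAlgHom_apply _ f).trans u.2.2

theorem fixGroupToAlgHom_apply_X (f : K⟮X⟯) (u : fixGroup f) : fixGroupToAlgHom f u X = u :=
  compAlgHom_X (transcendental_of_mem_fixGroup u.2)

theorem fixGroupToAlgHom_injective (f : K⟮X⟯) : Function.Injective (fixGroupToAlgHom f) :=
  fun u v huv ↦ Subtype.ext <| by
    rw [← fixGroupToAlgHom_apply_X f u, ← fixGroupToAlgHom_apply_X f v, huv]

end RatFunc

open RatFunc

/-- If `|Γ_K(f)| = deg f` then the extension `K(f) ⊆ K(x)` is normal. -/
theorem normal_of_fixGroup_card_eq {K : Type*} [Field K] (f : RatFunc K)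
    (hf : 0 < ratDeg f) (h : (fixGroup f).ncard = ratDeg f) :
    Normal (IntermediateField.adjoin K {f}) (RatFunc K) := by
  have hrank : finrank K⟮f⟯ K⟮X⟯ = ratDeg f := finrank_eq_max_natDegree f
  have : FiniteDimensional K⟮f⟯ K⟮X⟯ := Module.finite_of_finrank_pos (hrank ▸ hf)
  refine (IsGalois.of_finrank_le_card_algHom ?_).to_normal
  calc finrank K⟮f⟯ K⟮X⟯ = Nat.card (fixGroup f) := by rw [hrank, ← h, Nat.card_coe_set_eq]
    _ ≤ Nat.card (K⟮X⟯ →ₐ[K⟮f⟯] K⟮X⟯) :=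
      Nat.card_le_card_of_injective _ (fixGroupToAlgHom_injective f)
end

section
/- Let f ∈ K[x] be a tame polynomial (char K does not divide deg f). If f = g₁∘h₁ = g₂∘h₂ with polynomial components and deg h₁ = deg h₂, then there is a linear polynomial u(x) = ax+b, a ≠ 0, with h₁ = u∘h₂. -/
open Polynomial

/-!
If `f = g ∘ h` with `deg g = d` and `deg h = m`, then only the leading term of `g`
contributes to the coefficients of `f` above degree `(d - 1) m`, so `f` agrees there with
`lc(f) · (h / lc h) ^ d`. Two decompositions with `deg h₁ = deg h₂ = m` thus give monic
`p, q` of degree `m` with `deg (p ^ d - q ^ d) ≤ (d - 1) m`. In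
`p ^ d - q ^ d = (p - q) ∑ pⁱ q^(d-1-i)` the sum has coefficient `d` in degree `(d - 1) m`,
which is nonzero by tameness, so `p - q` is a constant.
-/

namespace Polynomial

section CommRing

variable {R : Type*} [CommRing R]

theorem natDegree_comp_sub_leadingCoeff_mul_pow_le (g h : R[X]) :
    (g.comp h - C g.leadingCoeff * h ^ g.natDegree).natDegree
      ≤ (g.natDegree - 1) * h.natDegree := by
  have hlead : g.comp h - C g.leadingCoeff * h ^ g.natDegree = g.eraseLead.comp h := by
    nth_rewrite 1 [← eraseLead_add_C_mul_X_pow g]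
    rw [add_comp, mul_comp, C_comp, X_pow_comp]
    ring
  calc (g.comp h - C g.leadingCoeff * h ^ g.natDegree).natDegree
      = (g.eraseLead.comp h).natDegree := by rw [hlead]
    _ ≤ g.eraseLead.natDegree * h.natDegree := natDegree_comp_le
    _ ≤ (g.natDegree - 1) * h.natDegree := Nat.mul_le_mul_right _ (eraseLead_natDegree_le g)

variable {p q : R[X]} {d : ℕ}

theorem natDegree_pow_mul_pow_of_monic (hp : p.Monic) (hq : q.Monic)
    (hpq : p.natDegree = q.natDegree) {i : ℕ} (hi : i < d) :
    (p ^ i * q ^ (d - 1 - i)).natDegree = (d - 1) * q.natDegree := by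
  rw [(hp.pow i).natDegree_mul (hq.pow _), hp.natDegree_pow, hq.natDegree_pow, hpq, ← add_mul]
  congr 1
  omega

theorem coeff_geom_sum₂_of_monic (hp : p.Monic) (hq : q.Monic)
    (hpq : p.natDegree = q.natDegree) :
    (∑ i ∈ Finset.range d, p ^ i * q ^ (d - 1 - i)).coeff ((d - 1) * q.natDegree) = d := by
  have hcoeff : ∀ i ∈ Finset.range d,
      (p ^ i * q ^ (d - 1 - i)).coeff ((d - 1) * q.natDegree) = 1 := fun i hi =>
    natDegree_pow_mul_pow_of_monic hp hq hpq (Finset.mem_range.mp hi) ▸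
      ((hp.pow i).mul (hq.pow _)).coeff_natDegree
  rw [finsetSum_coeff, Finset.sum_congr rfl hcoeff, Finset.sum_const, Finset.card_range,
    nsmul_one]

theorem natDegree_geom_sum₂_of_monic (hp : p.Monic) (hq : q.Monic)
    (hpq : p.natDegree = q.natDegree) (hd : (d : R) ≠ 0) :
    (∑ i ∈ Finset.range d, p ^ i * q ^ (d - 1 - i)).natDegree = (d - 1) * q.natDegree :=
  natDegree_eq_of_le_of_coeff_ne_zero
    (natDegree_sum_le_of_forall_le _ _ fun _ hi =>
      (natDegree_pow_mul_pow_of_monic hp hq hpq (Finset.mem_range.mp hi)).le)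
    (coeff_geom_sum₂_of_monic hp hq hpq ▸ hd)

theorem Monic.exists_eq_add_C_of_natDegree_pow_sub_pow_le [NoZeroDivisors R] (hp : p.Monic)
    (hq : q.Monic) (hpq : p.natDegree = q.natDegree) (hd : (d : R) ≠ 0)
    (hsub : (p ^ d - q ^ d).natDegree ≤ (d - 1) * q.natDegree) : ∃ c, p = q + C c := by
  by_cases hpq' : p = q
  · exact ⟨0, by rw [hpq', C_0, add_zero]⟩
  have hS0 : ∑ i ∈ Finset.range d, p ^ i * q ^ (d - 1 - i) ≠ 0 := fun h => hd <| by
    rw [← coeff_geom_sum₂_of_monic hp hq hpq, h, coeff_zero]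
  have hle : (d - 1) * q.natDegree + (p - q).natDegree ≤ (d - 1) * q.natDegree :=
    calc (d - 1) * q.natDegree + (p - q).natDegree
        = ((∑ i ∈ Finset.range d, p ^ i * q ^ (d - 1 - i)) * (p - q)).natDegree := by
          rw [Polynomial.natDegree_mul hS0 (sub_ne_zero.mpr hpq'),
            natDegree_geom_sum₂_of_monic hp hq hpq hd]
      _ = (p ^ d - q ^ d).natDegree := by rw [geom_sum₂_mul]
      _ ≤ (d - 1) * q.natDegree := hsub
  obtain ⟨c, hc⟩ := Polynomial.natDegree_eq_zero.mp (show (p - q).natDegree = 0 by omega)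
  exact ⟨c, by rw [hc, add_sub_cancel]⟩

end CommRing

section Field

variable {K : Type*} [Field K]

theorem natDegree_comp_sub_leadingCoeff_mul_monic_pow_le (g h : K[X])
    (hh : h.natDegree ≠ 0) :
    (g.comp h - C (g.comp h).leadingCoeff * (h * C h.leadingCoeff⁻¹) ^ g.natDegree).natDegree
      ≤ (g.natDegree - 1) * h.natDegree := by
  have ha : h.leadingCoeff ≠ 0 :=
    leadingCoeff_ne_zero.mpr (ne_zero_of_natDegree_gt (Nat.pos_of_ne_zero hh))
  have hunit : C (h.leadingCoeff ^ g.natDegree) * C h.leadingCoeff⁻¹ ^ g.natDegree = 1 := by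
    rw [← C_pow, ← C_mul, ← mul_pow, mul_inv_cancel₀ ha, one_pow, C_1]
  have hscale : C (g.comp h).leadingCoeff * (h * C h.leadingCoeff⁻¹) ^ g.natDegree
      = C g.leadingCoeff * h ^ g.natDegree := by
    rw [leadingCoeff_comp hh, mul_pow, C_mul]
    linear_combination (C g.leadingCoeff * h ^ g.natDegree) * hunit
  rw [hscale]
  exact natDegree_comp_sub_leadingCoeff_mul_pow_le g h

theorem natDegree_monic_pow_sub_monic_pow_le_of_comp_eq {g₁ g₂ h₁ h₂ : K[X]}
    (hcomp : g₁.comp h₁ = g₂.comp h₂) (hcomp₀ : g₁.comp h₁ ≠ 0)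
    (hdeg : h₁.natDegree = h₂.natDegree) (hm : h₂.natDegree ≠ 0) :
    ((h₁ * C h₁.leadingCoeff⁻¹) ^ g₁.natDegree
        - (h₂ * C h₂.leadingCoeff⁻¹) ^ g₁.natDegree).natDegree
      ≤ (g₁.natDegree - 1) * h₂.natDegree := by
  set f := g₁.comp h₁
  have hg : g₂.natDegree = g₁.natDegree := Nat.eq_of_mul_eq_mul_right (Nat.pos_of_ne_zero hm)
    (by rw [← natDegree_comp, ← hcomp, natDegree_comp, hdeg])
  have h₁' := natDegree_comp_sub_leadingCoeff_mul_monic_pow_le g₁ h₁ (hdeg ▸ hm)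
  have h₂' := natDegree_comp_sub_leadingCoeff_mul_monic_pow_le g₂ h₂ hm
  rw [hdeg] at h₁'
  rw [← hcomp, hg] at h₂'
  set p := h₁ * C h₁.leadingCoeff⁻¹
  set q := h₂ * C h₂.leadingCoeff⁻¹
  calc (p ^ g₁.natDegree - q ^ g₁.natDegree).natDegree
      = (C f.leadingCoeff * (p ^ g₁.natDegree - q ^ g₁.natDegree)).natDegree :=
        (natDegree_C_mul (leadingCoeff_ne_zero.mpr hcomp₀)).symm
    _ = ((f - C f.leadingCoeff * q ^ g₁.natDegree)
          - (f - C f.leadingCoeff * p ^ g₁.natDegree)).natDegree := by ring_nf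
    _ ≤ (g₁.natDegree - 1) * h₂.natDegree := (natDegree_sub_le _ _).trans (max_le h₂' h₁')

end Field

end Polynomial

theorem tame_unique_right_component_general {K : Type*} [Field K]
    (f g₁ g₂ h₁ h₂ : K[X])
    (htame : ¬ (ringChar K : ℕ) ∣ f.natDegree)
    (e₁ : f = g₁.comp h₁) (e₂ : f = g₂.comp h₂)
    (hdeg : h₁.natDegree = h₂.natDegree) :
    ∃ a b : K, a ≠ 0 ∧ h₁ = (C a * X + C b).comp h₂ := by
  have hn : (f.natDegree : K) ≠ 0 := mt (ringChar.spec K _).mp htame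
  have hn₁ : f.natDegree = g₁.natDegree * h₂.natDegree := by rw [e₁, natDegree_comp, hdeg]
  have hd : (g₁.natDegree : K) ≠ 0 := left_ne_zero_of_mul (by rwa [hn₁, Nat.cast_mul] at hn)
  have hm : h₂.natDegree ≠ 0 := fun h => hn (by rw [hn₁, h, mul_zero, Nat.cast_zero])
  have hf : g₁.comp h₁ ≠ 0 := fun h => hn (by rw [e₁, h, natDegree_zero, Nat.cast_zero])
  have hh₁ : h₁ ≠ 0 := ne_zero_of_natDegree_gt (Nat.pos_of_ne_zero (hdeg ▸ hm))
  have hh₂ : h₂ ≠ 0 := ne_zero_of_natDegree_gt (Nat.pos_of_ne_zero hm)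
  have ha₁ : h₁.leadingCoeff ≠ 0 := leadingCoeff_ne_zero.mpr hh₁
  have ha₂ : h₂.leadingCoeff ≠ 0 := leadingCoeff_ne_zero.mpr hh₂
  have hq : (h₂ * C h₂.leadingCoeff⁻¹).natDegree = h₂.natDegree :=
    natDegree_mul_C (inv_ne_zero ha₂)
  obtain ⟨c, hc⟩ := Monic.exists_eq_add_C_of_natDegree_pow_sub_pow_le
    (monic_mul_leadingCoeff_inv hh₁) (monic_mul_leadingCoeff_inv hh₂)
    (by rw [natDegree_mul_C (inv_ne_zero ha₁), hq, hdeg]) hd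
    (hq ▸ natDegree_monic_pow_sub_monic_pow_le_of_comp_eq (e₁.symm.trans e₂) hf hdeg hm)
  have hunit : C h₁.leadingCoeff⁻¹ * C h₁.leadingCoeff = 1 := by
    rw [← C_mul, inv_mul_cancel₀ ha₁, C_1]
  refine ⟨h₁.leadingCoeff * h₂.leadingCoeff⁻¹, h₁.leadingCoeff * c,
    mul_ne_zero ha₁ (inv_ne_zero ha₂), ?_⟩
  rw [add_comp, mul_comp, C_comp, X_comp, C_comp, C_mul, C_mul]
  linear_combination C h₁.leadingCoeff * hc - h₁ * hunit

/-- Uniqueness of right components of equal degree for tame polynomials: if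
`f = g₁ ∘ h₁ = g₂ ∘ h₂` with `deg h₁ = deg h₂`, then `h₁ = (ax+b) ∘ h₂`. -/
theorem tame_unique_right_component {K : Type*} [Field K]
    (f g₁ g₂ h₁ h₂ : K[X])
    (hf : 0 < f.natDegree) (hg₁ : 0 < g₁.natDegree) (hg₂ : 0 < g₂.natDegree)
    (hh₁ : 0 < h₁.natDegree) (hh₂ : 0 < h₂.natDegree)
    (htame : ¬ (ringChar K : ℕ) ∣ f.natDegree)
    (e₁ : f = g₁.comp h₁) (e₂ : f = g₂.comp h₂)
    (hdeg : h₁.natDegree = h₂.natDegree) :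
    ∃ a b : K, a ≠ 0 ∧ h₁ = (C a * X + C b).comp h₂ :=
  tame_unique_right_component_general f g₁ g₂ h₁ h₂ htame e₁ e₂ hdeg
end

section
/- Let K be a field and f ∈ K[x] a tame polynomial (char K ∤ deg f). Then the fixing group Γ_K(f) = {Möbius transformations u : f∘u = f} is cyclic, and moreover every element of Γ_K(f) is of the form ax+b with a ≠ 0. -/
open Polynomial

/-! If `f ∘ u = f` then `u` is integral over the integrally closed ring `K[X]` (it is sent into
`K[X]` by the monic polynomial `f / lc f`), so `u` is a polynomial, of degree one: `u = a X + b`.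
Comparing leading coefficients gives `a ^ deg f = 1`, so the multipliers `a` form a finite, hence
cyclic, subgroup of `Kˣ`. In the tame case `u` is determined by `a`: two symmetries with the same
`a` differ by a translation `X + c` fixing `f`, and such a translation shifts the coefficient of
`X ^ (n - 1)` by `n • lc f • c`. -/

namespace Polynomial

variable {K : Type*} [Field K]

theorem eq_zero_of_taylor_eq_self {f : K[X]} (hn : (f.natDegree : K) ≠ 0) {b : K}
    (h : taylor b f = f) : b = 0 := by
  obtain ⟨m, hm⟩ : ∃ m, f.natDegree = m + 1 :=
    Nat.exists_eq_add_one.2 (Nat.pos_of_ne_zero fun h0 => hn (by simp [h0]))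
  set D := hasseDeriv m f
  have hD : D.natDegree ≤ 1 := (natDegree_hasseDeriv_le f m).trans (by omega)
  have hD1 : D.coeff 1 ≠ 0 := by
    rw [hasseDeriv_coeff, add_comm, Nat.choose_succ_self_right, ← hm, coeff_natDegree]
    exact mul_ne_zero hn (leadingCoeff_ne_zero.2 fun h0 => hn (by simp [h0]))
  have heval : D.eval b = D.eval 0 := by
    rw [← taylor_coeff, ← taylor_coeff, h, taylor_zero]
  rw [eq_X_add_C_of_natDegree_le_one hD] at heval
  simpa [hD1] using heval

def IsAffineSymmetry (f q : K[X]) : Prop := q.natDegree = 1 ∧ f.comp q = f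

theorem isAffineSymmetry_X (f : K[X]) : IsAffineSymmetry f X := ⟨natDegree_X, comp_X⟩

namespace IsAffineSymmetry

variable {f q q' : K[X]}

theorem comp_comp_eq (hq : IsAffineSymmetry f q) (r : K[X]) : f.comp (q.comp r) = f.comp r := by
  rw [← comp_assoc, hq.2]

theorem comp (hq : IsAffineSymmetry f q) (hq' : IsAffineSymmetry f q') :
    IsAffineSymmetry f (q.comp q') :=
  ⟨by rw [natDegree_comp, hq.1, hq'.1], by rw [hq.comp_comp_eq, hq'.2]⟩

theorem leadingCoeff_comp (hq : IsAffineSymmetry f q) (hq' : IsAffineSymmetry f q') :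
    (q.comp q').leadingCoeff = q.leadingCoeff * q'.leadingCoeff := by
  rw [Polynomial.leadingCoeff_comp (by rw [hq'.1]; exact one_ne_zero), hq.1, pow_one]

theorem leadingCoeff_ne_zero (hq : IsAffineSymmetry f q) : q.leadingCoeff ≠ 0 :=
  Polynomial.leadingCoeff_ne_zero.2 <| ne_zero_of_natDegree_gt (n := 0) <| by
    rw [hq.1]; exact one_pos

theorem exists_eq_C_mul_X_add_C (hq : IsAffineSymmetry f q) :
    ∃ a b, a ≠ 0 ∧ q = C a * X + C b :=
  ⟨_, _, hq.leadingCoeff_ne_zero, by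
    conv_lhs => rw [eq_X_add_C_of_natDegree_le_one hq.1.le]
    rw [leadingCoeff, hq.1]⟩

theorem iterate (hq : IsAffineSymmetry f q) (k : ℕ) :
    IsAffineSymmetry f ((q.comp ·)^[k] X) ∧
      ((q.comp ·)^[k] X).leadingCoeff = q.leadingCoeff ^ k := by
  induction k with
  | zero => exact ⟨isAffineSymmetry_X f, by simp⟩
  | succ k ih =>
    rw [Function.iterate_succ_apply']
    exact ⟨hq.comp ih.1, by rw [hq.leadingCoeff_comp ih.1, ih.2, pow_succ']⟩

theorem exists_inv (hq : IsAffineSymmetry f q) :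
    ∃ q', IsAffineSymmetry f q' ∧ q'.leadingCoeff = q.leadingCoeff⁻¹ := by
  obtain ⟨a, b, ha, rfl⟩ := hq.exists_eq_C_mul_X_add_C
  have hinv : (C a * X + C b).comp (C a⁻¹ * (X - C b)) = X := by
    simp only [add_comp, mul_comp, C_comp, X_comp, ← mul_assoc, ← C_mul, mul_inv_cancel₀ ha, C_1,
      one_mul]
    ring
  refine ⟨C a⁻¹ * (X - C b), ⟨?_, ?_⟩, ?_⟩
  · rw [natDegree_C_mul (inv_ne_zero ha), natDegree_X_sub_C]
  · rw [← hq.comp_comp_eq, hinv, comp_X]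
  · rw [leadingCoeff_mul, leadingCoeff_C, leadingCoeff_X_sub_C, mul_one, leadingCoeff_linear ha]

theorem leadingCoeff_pow_natDegree (hf : f ≠ 0) (hq : IsAffineSymmetry f q) :
    q.leadingCoeff ^ f.natDegree = 1 := by
  have h := congrArg leadingCoeff hq.2
  rw [Polynomial.leadingCoeff_comp (by rw [hq.1]; exact one_ne_zero)] at h
  exact mul_left_cancel₀ (Polynomial.leadingCoeff_ne_zero.2 hf) (h.trans (mul_one _).symm)

theorem eq_of_leadingCoeff_eq (hn : (f.natDegree : K) ≠ 0) (hq : IsAffineSymmetry f q)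
    (hq' : IsAffineSymmetry f q') (h : q.leadingCoeff = q'.leadingCoeff) : q = q' := by
  obtain ⟨a, b, ha, rfl⟩ := hq.exists_eq_C_mul_X_add_C
  obtain ⟨a', b', ha', rfl⟩ := hq'.exists_eq_C_mul_X_add_C
  rw [leadingCoeff_linear ha, leadingCoeff_linear ha'] at h
  subst h
  have htrans : (C a * X + C b).comp (X + C ((b' - b) / a)) = C a * X + C b' := by
    simp only [add_comp, mul_comp, C_comp, X_comp, mul_add, ← C_mul, mul_div_cancel₀ _ ha, C_sub]
    ring
  have hc : (b' - b) / a = 0 := by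
    refine eq_zero_of_taylor_eq_self hn ?_
    rw [taylor_apply, ← hq.comp_comp_eq, htrans, hq'.2]
  rw [← htrans, hc, C_0, add_zero, comp_X]

end IsAffineSymmetry

variable (f : K[X])

def symmetryMultipliers : Subgroup Kˣ where
  carrier := {a | ∃ q, IsAffineSymmetry f q ∧ q.leadingCoeff = a}
  one_mem' := ⟨X, isAffineSymmetry_X f, leadingCoeff_X⟩
  mul_mem' := by
    rintro _ _ ⟨q, hq, hlc⟩ ⟨q', hq', hlc'⟩
    exact ⟨q.comp q', hq.comp hq', by rw [hq.leadingCoeff_comp hq', hlc, hlc', Units.val_mul]⟩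
  inv_mem' := by
    rintro _ ⟨q, hq, hlc⟩
    obtain ⟨q', hq', hlc'⟩ := hq.exists_inv
    exact ⟨q', hq', by rw [hlc', hlc, Units.val_inv_eq_inv_val]⟩

theorem symmetryMultipliers_le_rootsOfUnity (hf : f ≠ 0) :
    symmetryMultipliers f ≤ rootsOfUnity f.natDegree K := by
  rintro a ⟨q, hq, hlc⟩
  rw [mem_rootsOfUnity', ← hlc]
  exact hq.leadingCoeff_pow_natDegree hf

theorem finite_symmetryMultipliers (hf : 0 < f.natDegree) : Finite (symmetryMultipliers f) :=
  have : NeZero f.natDegree := ⟨hf.ne'⟩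
  Finite.of_injective _ (Subgroup.inclusion_injective
    (symmetryMultipliers_le_rootsOfUnity f (ne_zero_of_natDegree_gt hf)))

end Polynomial

section RatFunc

variable {K : Type*} [Field K]

local notation "φ" => algebraMap K[X] (RatFunc K)

theorem ratComp_algebraMap_eq_aeval (f : K[X]) (u : RatFunc K) : ratComp (φ f) u = aeval u f :=
  RatFunc.eval_algebraMap _ _ _

theorem ratComp_algebraMap (p q : K[X]) : ratComp (φ p) (φ q) = φ (p.comp q) := by
  rw [ratComp_algebraMap_eq_aeval, aeval_algebraMap_apply, comp_eq_aeval]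

theorem iterate_ratComp_algebraMap (p : K[X]) (k : ℕ) :
    (fun v => ratComp (φ p) v)^[k] RatFunc.X = φ ((p.comp ·)^[k] X) := by
  induction k with
  | zero => exact RatFunc.algebraMap_X.symm
  | succ k ih =>
    rw [Function.iterate_succ_apply', Function.iterate_succ_apply', ih, ratComp_algebraMap]

theorem ratDeg_algebraMap (p : K[X]) : ratDeg (φ p) = p.natDegree := by
  rw [ratDeg, RatFunc.num_algebraMap, RatFunc.denom_algebraMap, natDegree_one, max_zero]

theorem exists_eq_algebraMap_of_aeval_eq {f g : K[X]} (hf : 0 < f.natDegree) {u : RatFunc K}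
    (h : aeval u f = φ g) : ∃ q : K[X], φ q = u := by
  have hf0 : f ≠ 0 := ne_zero_of_natDegree_gt hf
  set p := (f * C f.leadingCoeff⁻¹).map (algebraMap K K[X])
  have hp : aeval u p = φ (g * C f.leadingCoeff⁻¹) := by
    rw [aeval_map_algebraMap, map_mul, aeval_C, h, IsScalarTower.algebraMap_apply K K[X],
      algebraMap_eq, ← map_mul]
  have hint : IsIntegral K[X] u :=
    .of_aeval_monic ((monic_mul_leadingCoeff_inv hf0).map _)
      (by rw [natDegree_map, natDegree_mul_C (inv_ne_zero (leadingCoeff_ne_zero.2 hf0))]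
          exact hf.ne')
      (hp ▸ isIntegral_algebraMap)
  exact IsIntegrallyClosed.isIntegral_iff.1 hint

theorem mem_fixGroup_algebraMap_iff {f : K[X]} (hf : 0 < f.natDegree) {u : RatFunc K} :
    u ∈ fixGroup (φ f) ↔ ∃ q, IsAffineSymmetry f q ∧ φ q = u := by
  constructor
  · rintro ⟨hdeg, hcomp⟩
    obtain ⟨q, rfl⟩ := exists_eq_algebraMap_of_aeval_eq hf
      ((ratComp_algebraMap_eq_aeval f u).symm.trans hcomp)
    rw [ratDeg_algebraMap] at hdeg
    rw [ratComp_algebraMap] at hcomp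
    exact ⟨q, ⟨hdeg, RatFunc.algebraMap_injective K hcomp⟩, rfl⟩
  · rintro ⟨q, hq, rfl⟩
    exact ⟨by rw [ratDeg_algebraMap, hq.1], by rw [ratComp_algebraMap, hq.2]⟩

end RatFunc

theorem fixGroup_tame_cyclic_general {K : Type*} [Field K] (f : K[X])
    (htame : ¬ (ringChar K : ℕ) ∣ f.natDegree) :
    (∃ γ ∈ fixGroup (algebraMap K[X] (RatFunc K) f),
      ∀ u ∈ fixGroup (algebraMap K[X] (RatFunc K) f),
        ∃ n : ℕ, u = (fun v => ratComp γ v)^[n] RatFunc.X) ∧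
    (∀ u ∈ fixGroup (algebraMap K[X] (RatFunc K) f),
      ∃ a b : K, a ≠ 0 ∧ u = RatFunc.C a * RatFunc.X + RatFunc.C b) := by
  have hn : (f.natDegree : K) ≠ 0 := fun h => htame ((ringChar.spec K _).1 h)
  have hf : 0 < f.natDegree := Nat.pos_of_ne_zero fun h => htame (h ▸ dvd_zero _)
  have := finite_symmetryMultipliers f hf
  obtain ⟨g, hg⟩ := IsCyclic.exists_monoid_generator (α := symmetryMultipliers f)
  obtain ⟨q₀, hq₀, hlc₀⟩ := g.2
  refine ⟨⟨_, (mem_fixGroup_algebraMap_iff hf).2 ⟨q₀, hq₀, rfl⟩, fun u hu => ?_⟩, fun u hu => ?_⟩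
  · obtain ⟨q, hq, rfl⟩ := (mem_fixGroup_algebraMap_iff hf).1 hu
    obtain ⟨k, hk⟩ := Submonoid.mem_powers_iff _ _ |>.1
      (hg ⟨Units.mk0 _ hq.leadingCoeff_ne_zero, q, hq, rfl⟩)
    have hlc : ((q₀.comp ·)^[k] X).leadingCoeff = q.leadingCoeff := by
      rw [(hq₀.iterate k).2, hlc₀]
      simpa using congrArg (fun x : symmetryMultipliers f => ((x : Kˣ) : K)) hk
    exact ⟨k, by rw [iterate_ratComp_algebraMap, (hq₀.iterate k).1.eq_of_leadingCoeff_eq hn hq hlc]⟩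
  · obtain ⟨q, hq, rfl⟩ := (mem_fixGroup_algebraMap_iff hf).1 hu
    obtain ⟨a, b, ha, rfl⟩ := hq.exists_eq_C_mul_X_add_C
    exact ⟨a, b, ha, by simp [RatFunc.algebraMap_C, RatFunc.algebraMap_X]⟩

/-- The fixing group of a tame polynomial is cyclic, and all its elements are
affine maps `ax + b` with `a ≠ 0`. -/
theorem fixGroup_tame_cyclic {K : Type*} [Field K] (f : K[X])
    (hf : 0 < f.natDegree) (htame : ¬ (ringChar K : ℕ) ∣ f.natDegree) :
    (∃ γ ∈ fixGroup (algebraMap K[X] (RatFunc K) f),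
      ∀ u ∈ fixGroup (algebraMap K[X] (RatFunc K) f),
        ∃ n : ℕ, u = (fun v => ratComp γ v)^[n] RatFunc.X) ∧
    (∀ u ∈ fixGroup (algebraMap K[X] (RatFunc K) f),
      ∃ a b : K, a ≠ 0 ∧ u = RatFunc.C a * RatFunc.X + RatFunc.C b) :=
  fixGroup_tame_cyclic_general f htame
end

section
/- Let K be any field and p₁, p₂ ∈ K[x] tame polynomials (char K divides neither degree). Let k₁ = |Γ_K(p₁)|, k₂ = |Γ_K(p₂)|, k = |Γ_K(p₁∘p₂)|. Then k divides k₁·k₂. -/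
open Polynomial

/-!
`Γ_K(p)` of a polynomial `p` consists of polynomials, since a solution of `p(u) = p` is integral
over `K[X]`; for tame `p` such an affine map `a X + b` is determined by `a`, so `|Γ_K(p)|` is the
order of the group `M(p) ≤ Kˣ` of these multipliers. Let `σ = a X + b` fix `p₁ ∘ p₂`. Uniqueness
of right components for the tame `p₁`, applied to `p₁ ∘ (p₂ ∘ σ) = p₁ ∘ p₂`, gives
`p₂ ∘ σ + e = a ^ deg p₂ • (p₂ + e)`, where `p₁ = lc p₁ • (X + e) ^ deg p₁ + O(X ^ (deg p₁ - 2))`.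
Hence `a ↦ a ^ deg p₂` maps `M(p₁ ∘ p₂)` into `M(p₁)`, with kernel inside `M(p₂)`.
-/

theorem Subgroup.card_dvd_mul_of_inf_ker_le_of_map_le {G G' : Type*} [Group G] [Group G']
    (f : G →* G') {S A : Subgroup G} {B : Subgroup G'} (hA : f.ker ⊓ S ≤ A) (hB : S.map f ≤ B) :
    Nat.card S ∣ Nat.card A * Nat.card B := by
  have hcard : Nat.card (f.ker ⊓ S : Subgroup G) * Nat.card (S.map f) = Nat.card S := by
    rw [← relIndex_ker, ← relIndex_bot_left, ← relIndex_bot_left, relIndex_inf_mul_relIndex,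
      bot_inf_eq]
  rw [← hcard]
  exact mul_dvd_mul (card_dvd_of_le hA) (card_dvd_of_le hB)

theorem IsIntegral.of_aeval_of_isUnit_leadingCoeff {R A : Type*} [CommRing R] [CommRing A]
    [Algebra R A] {x : A} {p : R[X]} (hlc : IsUnit p.leadingCoeff) (hdeg : p.natDegree ≠ 0)
    (hx : IsIntegral R (aeval x p)) : IsIntegral R x := by
  refine IsIntegral.of_aeval_monic (p := C ↑hlc.unit⁻¹ * p)
    (monic_C_mul_of_mul_leadingCoeff_eq_one hlc.val_inv_mul) ?_ ?_
  · rwa [natDegree_C_mul_of_isUnit hlc.unit⁻¹.isUnit]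
  · rw [map_mul, aeval_C]
    exact isIntegral_algebraMap.mul hx

namespace Polynomial

section Domain

variable {A : Type*} [CommRing A] [NoZeroDivisors A]

theorem comp_right_cancel {g h p : A[X]} (hp : p.natDegree ≠ 0) (H : g.comp p = h.comp p) :
    g = h := by
  have hc : (g - h).comp p = 0 := by rw [sub_comp, H, sub_self]
  rcases comp_eq_zero_iff.mp hc with h0 | ⟨-, hpC⟩
  · exact sub_eq_zero.mp h0
  · exact absurd (hpC ▸ natDegree_C _) hp

theorem degree_comp_lt {r S : A[X]} {k : ℕ} (hr : r.degree < k) (hS : S.natDegree ≠ 0) :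
    (r.comp S).degree < ↑(k * S.natDegree) := by
  rcases eq_or_ne r 0 with rfl | hr0
  · rw [zero_comp, degree_zero]
    exact WithBot.bot_lt_coe _
  refine (degree_le_natDegree).trans_lt ?_
  rw [natDegree_comp, Nat.cast_lt]
  exact Nat.mul_lt_mul_of_pos_right ((natDegree_lt_iff_degree_lt hr0).mpr hr) (by omega)

theorem le_degree_pow_sub_pow {f g : A[X]} (hdeg : f.natDegree = g.natDegree)
    (hlc : f.leadingCoeff = g.leadingCoeff) (hfg : f ≠ g) {n : ℕ} (hn : (n : A) ≠ 0) :
    ↑((n - 1) * f.natDegree) ≤ (f ^ n - g ^ n).degree := by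
  have hf : f.leadingCoeff ≠ 0 := fun h ↦
    hfg (by rw [leadingCoeff_eq_zero.mp h, leadingCoeff_eq_zero.mp (hlc.symm.trans h)])
  set m := f.natDegree
  -- `f ^ n - g ^ n = (∑ j < n, f ^ j g ^ (n - 1 - j)) (f - g)`, and the sum has top coefficient
  -- `n lc f ^ (n - 1)` in degree `(n - 1) m`
  have hterm : ∀ j ∈ Finset.range n,
      (f ^ j * g ^ (n - 1 - j)).coeff ((n - 1) * m) = f.leadingCoeff ^ (n - 1) := by
    intro j hj
    have hsplit : (n - 1) * m = j * m + (n - 1 - j) * m := by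
      rw [← add_mul, Nat.add_sub_cancel' (by simp at hj; omega)]
    rw [hsplit, coeff_mul_add_eq_of_natDegree_le (natDegree_pow_le_of_le j le_rfl)
      (natDegree_pow_le_of_le _ hdeg.ge), coeff_pow_of_natDegree_le le_rfl,
      coeff_pow_of_natDegree_le hdeg.ge, coeff_natDegree, hdeg, coeff_natDegree, ← hlc,
      ← pow_add, Nat.add_sub_cancel' (by simp at hj; omega)]
  have hsum : (∑ j ∈ Finset.range n, f ^ j * g ^ (n - 1 - j)).coeff ((n - 1) * m) ≠ 0 := by
    rw [finsetSum_coeff, Finset.sum_congr rfl hterm, Finset.sum_const, Finset.card_range,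
      nsmul_eq_mul]
    exact mul_ne_zero hn (pow_ne_zero _ hf)
  rw [← geom_sum₂_mul]
  exact (le_degree_of_ne_zero hsum).trans (degree_le_mul_left _ (sub_ne_zero.mpr hfg))

end Domain

variable {K : Type*} [Field K]

/-- The shift `e` with `p = lc p • (X + e) ^ deg p + O(X ^ (deg p - 2))`. -/
noncomputable def tschirnhausShift (p : K[X]) : K :=
  p.coeff (p.natDegree - 1) / (p.natDegree * p.leadingCoeff)

theorem degree_sub_C_mul_X_add_C_tschirnhausShift_pow_lt {p : K[X]}
    (hp : (p.natDegree : K) ≠ 0) :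
    (p - C p.leadingCoeff * (X + C p.tschirnhausShift) ^ p.natDegree).degree
      < ↑(p.natDegree - 1) := by
  have hn : p.natDegree ≠ 0 := by rintro h; simp [h] at hp
  have hlc : p.leadingCoeff ≠ 0 := by rintro h; simp_all
  rw [degree_lt_iff_coeff_zero]
  intro k hk
  rw [coeff_sub, coeff_C_mul, coeff_X_add_C_pow]
  obtain rfl | rfl | hk := (show k = p.natDegree - 1 ∨ k = p.natDegree ∨ p.natDegree < k by omega)
  · rw [Nat.sub_sub_self (by omega), pow_one, Nat.choose_symm (by omega), Nat.choose_one_right,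
      tschirnhausShift]
    field_simp
    ring
  · simp
  · rw [coeff_eq_zero_of_natDegree_lt hk, Nat.choose_eq_zero_of_lt hk]
    simp

theorem degree_comp_sub_C_mul_add_C_tschirnhausShift_pow_lt {p : K[X]}
    (hp : (p.natDegree : K) ≠ 0) {S : K[X]} (hS : S.natDegree ≠ 0) :
    (p.comp S - C p.leadingCoeff * (S + C p.tschirnhausShift) ^ p.natDegree).degree
      < ↑((p.natDegree - 1) * S.natDegree) := by
  have h := degree_comp_lt (degree_sub_C_mul_X_add_C_tschirnhausShift_pow_lt hp) hS
  simpa only [sub_comp, mul_comp, C_comp, pow_comp, add_comp, X_comp] using h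

theorem add_C_tschirnhausShift_eq_of_comp_eq {p Q R : K[X]} (hp : (p.natDegree : K) ≠ 0)
    (hR : R.natDegree ≠ 0) (hQR : Q.natDegree = R.natDegree) (h : p.comp Q = p.comp R) :
    Q + C p.tschirnhausShift =
      C (Q.leadingCoeff / R.leadingCoeff) * (R + C p.tschirnhausShift) := by
  have hp0 : p.leadingCoeff ≠ 0 := by rintro h; simp_all
  have hR0 : R.leadingCoeff ≠ 0 := by rintro h; simp_all
  have hQ0 : Q.leadingCoeff ≠ 0 := by rintro h; simp_all
  set e := p.tschirnhausShift
  set α := Q.leadingCoeff / R.leadingCoeff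
  set n := p.natDegree
  have hC : ∀ {S : K[X]}, S.natDegree ≠ 0 → (S + C e).leadingCoeff = S.leadingCoeff := fun hS ↦
    leadingCoeff_add_of_degree_lt' (degree_C_le.trans_lt (natDegree_pos_iff_degree_pos.mp
      (Nat.pos_of_ne_zero hS)))
  have hα : α ^ n = 1 := by
    have hlc := congrArg leadingCoeff h
    rw [leadingCoeff_comp (hQR ▸ hR), leadingCoeff_comp hR] at hlc
    rw [div_pow, mul_left_cancel₀ hp0 hlc, div_self (pow_ne_zero _ hR0)]
  have hFdeg : (Q + C e).natDegree = R.natDegree := by rw [natDegree_add_C, hQR]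
  have hGdeg : (C α * (R + C e)).natDegree = R.natDegree := by
    rw [natDegree_C_mul (div_ne_zero hQ0 hR0), natDegree_add_C]
  have hlc : (Q + C e).leadingCoeff = (C α * (R + C e)).leadingCoeff := by
    rw [leadingCoeff_mul, leadingCoeff_C, hC hR, hC (hQR ▸ hR), div_mul_cancel₀ _ hR0]
  by_contra hne
  -- as `α ^ n = 1`, `lc p • ((Q + e) ^ n - (α (R + e)) ^ n)` is a difference of two remainders of
  -- degree `< (n - 1) deg R`, too small for distinct `n`-th powers with equal leading terms
  have hlow := le_degree_pow_sub_pow (hFdeg.trans hGdeg.symm) hlc hne hp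
  have key : C p.leadingCoeff * ((Q + C e) ^ n - (C α * (R + C e)) ^ n) =
      (p.comp R - C p.leadingCoeff * (R + C e) ^ n) -
        (p.comp Q - C p.leadingCoeff * (Q + C e) ^ n) := by
    rw [mul_pow, ← C_pow, hα, C_1, one_mul, h]
    ring
  have hup := (degree_sub_le _ _).trans_lt
    (max_lt (degree_comp_sub_C_mul_add_C_tschirnhausShift_pow_lt hp hR)
      (hQR ▸ degree_comp_sub_C_mul_add_C_tschirnhausShift_pow_lt hp (hQR ▸ hR)))
  rw [← key, degree_C_mul hp0] at hup
  rw [hFdeg] at hlow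
  exact hlow.not_gt hup

theorem eq_of_comp_eq_of_leadingCoeff_eq {p Q R : K[X]} (hp : (p.natDegree : K) ≠ 0)
    (hR : R.natDegree ≠ 0) (hQR : Q.natDegree = R.natDegree)
    (hlc : Q.leadingCoeff = R.leadingCoeff) (h : p.comp Q = p.comp R) : Q = R := by
  have hR0 : R.leadingCoeff ≠ 0 := by rintro h; simp_all
  simpa [hlc, div_self hR0] using add_C_tschirnhausShift_eq_of_comp_eq hp hR hQR h

theorem linear_comp_linear {A : Type*} [CommSemiring A] (a b a' b' : A) :
    (C a * X + C b).comp (C a' * X + C b') = C (a * a') * X + C (a * b' + b) := by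
  simp only [add_comp, mul_comp, C_comp, X_comp, C_mul, C_add]
  ring

noncomputable def fixMultipliers (p : K[X]) : Subgroup Kˣ where
  carrier := {a | ∃ b : K, p.comp (C (a : K) * X + C b) = p}
  one_mem' := ⟨0, by simp⟩
  mul_mem' := by
    rintro a a' ⟨b, hb⟩ ⟨b', hb'⟩
    refine ⟨a * b' + b, ?_⟩
    rw [Units.val_mul, ← linear_comp_linear, ← comp_assoc, hb, hb']
  inv_mem' := by
    rintro a ⟨b, hb⟩
    refine ⟨-(a⁻¹ * b : K), ?_⟩
    conv_lhs => rw [← hb, comp_assoc, linear_comp_linear]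
    simp

theorem comp_linear_add_C_tschirnhausShift {p₁ p₂ : K[X]} (hp₁ : (p₁.natDegree : K) ≠ 0)
    (hp₂ : p₂.natDegree ≠ 0) {a b : K} (ha : a ≠ 0)
    (h : (p₁.comp p₂).comp (C a * X + C b) = p₁.comp p₂) :
    p₂.comp (C a * X + C b) + C p₁.tschirnhausShift =
      C (a ^ p₂.natDegree) * (p₂ + C p₁.tschirnhausShift) := by
  have hlc : p₂.leadingCoeff ≠ 0 := by rintro h; simp_all
  have hdeg : (p₂.comp (C a * X + C b)).natDegree = p₂.natDegree := by
    rw [natDegree_comp, natDegree_linear ha, mul_one]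
  have key := add_C_tschirnhausShift_eq_of_comp_eq hp₁ hp₂ hdeg (by rwa [← comp_assoc])
  rwa [leadingCoeff_comp (by rw [natDegree_linear ha]; exact one_ne_zero),
    leadingCoeff_linear ha, mul_div_cancel_left₀ _ hlc] at key

theorem pow_natDegree_mem_fixMultipliers {p₁ p₂ : K[X]} (hp₁ : (p₁.natDegree : K) ≠ 0)
    (hp₂ : p₂.natDegree ≠ 0) {a : Kˣ} (ha : a ∈ fixMultipliers (p₁.comp p₂)) :
    a ^ p₂.natDegree ∈ fixMultipliers p₁ := by
  obtain ⟨b, hb⟩ := ha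
  have key := comp_linear_add_C_tschirnhausShift hp₁ hp₂ a.ne_zero hb
  refine ⟨((a : K) ^ p₂.natDegree - 1) * p₁.tschirnhausShift, comp_right_cancel hp₂ ?_⟩
  have hlin : (C ((a ^ p₂.natDegree : Kˣ) : K) * X +
      C (((a : K) ^ p₂.natDegree - 1) * p₁.tschirnhausShift)).comp p₂ =
        p₂.comp (C (a : K) * X + C b) := by
    simp only [add_comp, mul_comp, C_comp, X_comp]
    simp only [Units.val_pow_eq_pow_val, C_mul, C_sub, C_1]
    linear_combination -key
  rw [comp_assoc, hlin, ← comp_assoc, hb]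

theorem mem_fixMultipliers_of_pow_natDegree_eq_one {p₁ p₂ : K[X]}
    (hp₁ : (p₁.natDegree : K) ≠ 0) (hp₂ : p₂.natDegree ≠ 0) {a : Kˣ}
    (ha : a ∈ fixMultipliers (p₁.comp p₂)) (h1 : a ^ p₂.natDegree = 1) :
    a ∈ fixMultipliers p₂ := by
  obtain ⟨b, hb⟩ := ha
  have key := comp_linear_add_C_tschirnhausShift hp₁ hp₂ a.ne_zero hb
  rw [← Units.val_pow_eq_pow_val, h1, Units.val_one, C_1, one_mul] at key
  exact ⟨b, add_right_cancel key⟩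

theorem card_fixMultipliers_comp_dvd {p₁ p₂ : K[X]} (hp₁ : (p₁.natDegree : K) ≠ 0)
    (hp₂ : p₂.natDegree ≠ 0) :
    Nat.card (fixMultipliers (p₁.comp p₂)) ∣
      Nat.card (fixMultipliers p₁) * Nat.card (fixMultipliers p₂) := by
  rw [mul_comm]
  refine Subgroup.card_dvd_mul_of_inf_ker_le_of_map_le (powMonoidHom p₂.natDegree) ?_ ?_
  · rintro a ⟨h1, ha⟩
    exact mem_fixMultipliers_of_pow_natDegree_eq_one hp₁ hp₂ ha h1
  · rintro _ ⟨a, ha, rfl⟩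
    exact pow_natDegree_mem_fixMultipliers hp₁ hp₂ ha

end Polynomial

section RatFunc

variable {K : Type*} [Field K]

theorem ratComp_algebraMap_s16 (p : K[X]) (u : RatFunc K) :
    ratComp (algebraMap K[X] (RatFunc K) p) u = aeval u p := by
  rw [ratComp, RatFunc.eval, RatFunc.num_algebraMap, RatFunc.denom_algebraMap, eval₂_one,
    div_one, aeval_def]

theorem ratDeg_algebraMap_s16 (q : K[X]) : ratDeg (algebraMap K[X] (RatFunc K) q) = q.natDegree := by
  rw [ratDeg, RatFunc.num_algebraMap, RatFunc.denom_algebraMap, natDegree_one, max_eq_left]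
  exact Nat.zero_le _

theorem fixGroup_algebraMap {p : K[X]} (hp : p.natDegree ≠ 0) :
    fixGroup (algebraMap K[X] (RatFunc K) p) =
      algebraMap K[X] (RatFunc K) '' {q | q.natDegree = 1 ∧ p.comp q = p} := by
  ext u
  constructor
  · rintro ⟨hdeg, hcomp⟩
    rw [ratComp_algebraMap_s16] at hcomp
    have hint : IsIntegral K[X] u := by
      refine IsIntegral.of_aeval_of_isUnit_leadingCoeff (p := p.map (algebraMap K K[X])) ?_ ?_ ?_
      · rw [leadingCoeff_map_of_injective (algebraMap K K[X]).injective]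
        exact (leadingCoeff_ne_zero.mpr (by rintro rfl; simp at hp)).isUnit.map _
      · rwa [natDegree_map_eq_of_injective (algebraMap K K[X]).injective]
      · rw [aeval_map_algebraMap, hcomp]
        exact isIntegral_algebraMap
    obtain ⟨q, rfl⟩ := IsIntegrallyClosed.isIntegral_iff.mp hint
    rw [ratDeg_algebraMap_s16] at hdeg
    rw [aeval_algebraMap_apply, ← comp_eq_aeval] at hcomp
    exact ⟨q, ⟨hdeg, RatFunc.algebraMap_injective K hcomp⟩, rfl⟩
  · rintro ⟨q, ⟨hq, hpq⟩, rfl⟩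
    refine ⟨by rw [ratDeg_algebraMap_s16, hq], ?_⟩
    rw [ratComp_algebraMap_s16, aeval_algebraMap_apply, ← comp_eq_aeval, hpq]

theorem ncard_fixGroup_algebraMap {p : K[X]} (hp : (p.natDegree : K) ≠ 0) :
    (fixGroup (algebraMap K[X] (RatFunc K) p)).ncard = Nat.card (fixMultipliers p) := by
  have hlc : ∀ q : K[X], q.natDegree = 1 → q.leadingCoeff ≠ 0 := by
    rintro q hq h
    simp_all
  rw [fixGroup_algebraMap (by rintro h; simp [h] at hp),
    Set.ncard_image_of_injective _ (RatFunc.algebraMap_injective K), ← SetLike.coe_sort_coe,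
    Nat.card_coe_set_eq]
  refine Set.ncard_congr (fun q hq ↦ Units.mk0 q.leadingCoeff (hlc q hq.1)) ?_ ?_ ?_
  · rintro q ⟨hq, hpq⟩
    refine ⟨q.coeff 0, ?_⟩
    rwa [Units.val_mk0, leadingCoeff, hq, ← eq_X_add_C_of_natDegree_le_one hq.le]
  · rintro q r ⟨hq, hpq⟩ ⟨hr, hpr⟩ hqr
    exact eq_of_comp_eq_of_leadingCoeff_eq hp (by rw [hr]; exact one_ne_zero) (hq.trans hr.symm)
      ((Units.mk0_inj _ _).mp hqr) (hpq.trans hpr.symm)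
  · rintro a ⟨b, hb⟩
    exact ⟨C (a : K) * X + C b, ⟨natDegree_linear a.ne_zero, hb⟩,
      Units.ext (leadingCoeff_linear a.ne_zero)⟩

end RatFunc

theorem fixGroup_card_comp_dvd_general {K : Type*} [Field K] (p₁ p₂ : K[X])
    (t₁ : ¬ (ringChar K : ℕ) ∣ p₁.natDegree) (t₂ : ¬ (ringChar K : ℕ) ∣ p₂.natDegree) :
    (fixGroup (algebraMap K[X] (RatFunc K) (p₁.comp p₂))).ncard ∣
      (fixGroup (algebraMap K[X] (RatFunc K) p₁)).ncard *
        (fixGroup (algebraMap K[X] (RatFunc K) p₂)).ncard := by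
  have c₁ : (p₁.natDegree : K) ≠ 0 := mt (ringChar.spec K _).mp t₁
  have c₂ : (p₂.natDegree : K) ≠ 0 := mt (ringChar.spec K _).mp t₂
  have c : ((p₁.comp p₂).natDegree : K) ≠ 0 := by
    rw [natDegree_comp, Nat.cast_mul]
    exact mul_ne_zero c₁ c₂
  rw [ncard_fixGroup_algebraMap c, ncard_fixGroup_algebraMap c₁, ncard_fixGroup_algebraMap c₂]
  exact card_fixMultipliers_comp_dvd c₁ (by rintro h; simp [h] at c₂)

/-- For tame polynomials `p₁, p₂`, the order of `Γ_K(p₁ ∘ p₂)` divides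
`|Γ_K(p₁)| · |Γ_K(p₂)|`. -/
theorem fixGroup_card_comp_dvd {K : Type*} [Field K] (p₁ p₂ : K[X])
    (h₁ : 0 < p₁.natDegree) (h₂ : 0 < p₂.natDegree)
    (t₁ : ¬ (ringChar K : ℕ) ∣ p₁.natDegree) (t₂ : ¬ (ringChar K : ℕ) ∣ p₂.natDegree) :
    (fixGroup (algebraMap K[X] (RatFunc K) (p₁.comp p₂))).ncard ∣
      (fixGroup (algebraMap K[X] (RatFunc K) p₁)).ncard *
        (fixGroup (algebraMap K[X] (RatFunc K) p₂)).ncard :=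
  fixGroup_card_comp_dvd_general p₁ p₂ t₁ t₂
end
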